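/- arXiv:2005.10942 — 5 statements merged into one kernel-verified Lean document; each statement's English description precedes it below -/
import Mathlib

section
/- Let X be a real Hilbert space, let Z ⊂ X be a closed connected set, and let r > 0. Then Z is r-prox-regular if and only if for every y ∈ X such that d := dist(y, Z) < r there exists a unique x ∈ Z such that |y − x| = d and ⟨y − x, x − z⟩ + (|y − x|/(2r))·|x − z|² ≥ 0 for all z ∈ Z. -/
open MeasureTheory Set Filter Metric
open scoped RealInnerProductSpace Topology

/-- A set `Z` is `r`-prox-regular: every point `y` whose distance `d` to `Z` lies in
`(0, r)` admits a point `x ∈ Z` with `dist (x + (r/d)•(y-x), Z) = (r/d)‖y-x‖ = r`. -/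
def ProxRegular {X : Type*} [NormedAddCommGroup X] [InnerProductSpace ℝ X]
    (Z : Set X) (r : ℝ) : Prop :=
  ∀ y : X, infDist y Z ∈ Ioo 0 r →
    ∃ x ∈ Z, infDist (x + (r / infDist y Z) • (y - x)) Z = r ∧
      (r / infDist y Z) * ‖y - x‖ = r

/-! The point `x + (r/d)•(y - x)`, `d = ‖y - x‖`, lies at distance `r` from `x`, and
expanding `‖x + (r/d)•(y - x) - z‖² = r² + (2r/d)(⟪y - x, x - z⟫ + d/(2r)‖x - z‖²)` shows that
it is at distance at least `r` from `z` exactly when the variational inequality holds at `z`.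
So prox-regularity is the variational inequality at a nearest point; summing the inequality
at two nearest points `x, x'` gives `‖x - x'‖² ≤ (d/r)‖x - x'‖²`, whence uniqueness for `d < r`. -/

section
variable {X : Type*} [NormedAddCommGroup X] [InnerProductSpace ℝ X]

lemma norm_add_smul_sub_sub_sq (x y z : X) (t : ℝ) :
    ‖x + t • (y - x) - z‖ ^ 2 =
      t ^ 2 * ‖y - x‖ ^ 2 + 2 * t * ⟪y - x, x - z⟫ + ‖x - z‖ ^ 2 := by
  rw [show x + t • (y - x) - z = t • (y - x) + (x - z) by abel, norm_add_sq_real,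
    norm_smul, real_inner_smul_left, Real.norm_eq_abs, mul_pow, sq_abs]
  ring

lemma dist_add_smul_sub_self {x y : X} (hxy : x ≠ y) {r : ℝ} (hr : 0 ≤ r) :
    dist (x + (r / ‖y - x‖) • (y - x)) x = r := by
  have hd : 0 < ‖y - x‖ := norm_pos_iff.2 (sub_ne_zero.2 hxy.symm)
  rw [dist_eq_norm, add_sub_cancel_left, norm_smul, Real.norm_eq_abs,
    abs_of_nonneg (by positivity), div_mul_cancel₀ _ hd.ne']

lemma le_dist_add_smul_sub_iff {x y : X} (hxy : x ≠ y) {r : ℝ} (hr : 0 < r) (z : X) :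
    r ≤ dist (x + (r / ‖y - x‖) • (y - x)) z ↔
      0 ≤ ⟪y - x, x - z⟫ + ‖y - x‖ / (2 * r) * ‖x - z‖ ^ 2 := by
  set d := ‖y - x‖
  have hd : 0 < d := norm_pos_iff.2 (sub_ne_zero.2 hxy.symm)
  have hexpand : dist (x + (r / d) • (y - x)) z ^ 2 =
      r ^ 2 + 2 * r / d * (⟪y - x, x - z⟫ + d / (2 * r) * ‖x - z‖ ^ 2) := by
    rw [dist_eq_norm, norm_add_smul_sub_sub_sq]
    field_simp
    ring
  rw [← pow_le_pow_iff_left₀ hr.le dist_nonneg two_ne_zero, hexpand, le_add_iff_nonneg_right]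
  exact mul_nonneg_iff_of_pos_left (by positivity)

lemma infDist_add_smul_sub_eq_iff {Z : Set X} {x y : X} (hx : x ∈ Z) (hxy : x ≠ y)
    {r : ℝ} (hr : 0 < r) :
    infDist (x + (r / ‖y - x‖) • (y - x)) Z = r ↔
      ∀ z ∈ Z, ⟪y - x, x - z⟫ + ‖y - x‖ / (2 * r) * ‖x - z‖ ^ 2 ≥ 0 := by
  have hle : infDist (x + (r / ‖y - x‖) • (y - x)) Z ≤ r :=
    (infDist_le_dist_of_mem hx).trans_eq (dist_add_smul_sub_self hxy hr.le)
  rw [le_antisymm_iff, and_iff_right hle, le_infDist ⟨x, hx⟩]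
  exact forall₂_congr fun z _ => le_dist_add_smul_sub_iff hxy hr z

lemma eq_of_prox_normal_ineq {Z : Set X} {r : ℝ} {y x x' : X} (hx : x ∈ Z) (hx' : x' ∈ Z)
    (hyx : ‖y - x‖ < r) (hyx' : ‖y - x'‖ < r)
    (hineq : ∀ z ∈ Z, ⟪y - x, x - z⟫ + ‖y - x‖ / (2 * r) * ‖x - z‖ ^ 2 ≥ 0)
    (hineq' : ∀ z ∈ Z, ⟪y - x', x' - z⟫ + ‖y - x'‖ / (2 * r) * ‖x' - z‖ ^ 2 ≥ 0) :
    x = x' := by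
  have hr : 0 < r := (norm_nonneg _).trans_lt hyx
  have hinner : ⟪y - x, x - x'⟫ + ⟪y - x', x' - x⟫ = -‖x - x'‖ ^ 2 := by
    rw [← real_inner_self_eq_norm_sq]
    simp only [inner_sub_left, inner_sub_right, real_inner_comm]
    ring
  have hmul : ‖x - x'‖ ^ 2 * (2 * r - (‖y - x‖ + ‖y - x'‖)) ≤ 0 := by
    have h := add_nonneg (hineq x' hx') (hineq' x hx)
    rw [norm_sub_rev x' x] at h
    field_simp at h
    linear_combination h + 2 * r * hinner
  have hsq : ‖x - x'‖ ^ 2 = 0 :=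
    le_antisymm (nonpos_of_mul_nonpos_left hmul (by linarith)) (sq_nonneg _)
  simpa [sub_eq_zero] using hsq

end

theorem prox_regular_iff_unique_proj_general
    {X : Type*} [NormedAddCommGroup X] [InnerProductSpace ℝ X]
    (Z : Set X) (hZclosed : IsClosed Z) (hZconn : IsConnected Z)
    (r : ℝ) (hr : 0 < r) :
    ProxRegular Z r ↔
      ∀ y : X, infDist y Z < r →
        ∃! x : X, x ∈ Z ∧ ‖y - x‖ = infDist y Z ∧
          ∀ z ∈ Z, ⟪y - x, x - z⟫ + ‖y - x‖ / (2 * r) * ‖x - z‖ ^ 2 ≥ 0 := by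
  constructor
  · intro hprox y hyr
    obtain ⟨x, hx, hyx, hineq⟩ : ∃ x ∈ Z, ‖y - x‖ = infDist y Z ∧
        ∀ z ∈ Z, ⟪y - x, x - z⟫ + ‖y - x‖ / (2 * r) * ‖x - z‖ ^ 2 ≥ 0 := by
      rcases (infDist_nonneg (x := y) (s := Z)).eq_or_lt with hd | hd
      · have hy : y ∈ Z := (hZclosed.mem_iff_infDist_zero hZconn.nonempty).2 hd.symm
        exact ⟨y, hy, by simp [← hd], by simp⟩
      · obtain ⟨x, hx, hdist, hnorm⟩ := hprox y ⟨hd, hyr⟩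
        have hyx : ‖y - x‖ = infDist y Z := by
          field_simp at hnorm
          linarith
        have hxy : x ≠ y := fun h => by simp [h] at hyx; linarith
        rw [← hyx] at hdist
        exact ⟨x, hx, hyx, (infDist_add_smul_sub_eq_iff hx hxy hr).1 hdist⟩
    refine ⟨x, ⟨hx, hyx, hineq⟩, fun x' ⟨hx', hyx', hineq'⟩ => ?_⟩
    exact eq_of_prox_normal_ineq hx' hx (hyx' ▸ hyr) (hyx ▸ hyr) hineq' hineq
  · rintro hunique y ⟨hd, hyr⟩
    obtain ⟨x, ⟨hx, hyx, hineq⟩, -⟩ := hunique y hyr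
    have hxy : x ≠ y := fun h => by simp [h] at hyx; linarith
    refine ⟨x, hx, ?_, ?_⟩
    · rw [← hyx]
      exact (infDist_add_smul_sub_eq_iff hx hxy hr).2 hineq
    · rw [← hyx]
      exact div_mul_cancel₀ r (hyx ▸ hd.ne')

/-- A closed connected set `Z` in a real Hilbert space is `r`-prox-regular if and only if
for every `y` with `d := dist(y,Z) < r` there is a unique `x ∈ Z` with `‖y - x‖ = d` and
`⟪y - x, x - z⟫ + (‖y - x‖/(2r))‖x - z‖² ≥ 0` for all `z ∈ Z`. -/
theorem prox_regular_iff_unique_proj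
    {X : Type*} [NormedAddCommGroup X] [InnerProductSpace ℝ X] [CompleteSpace X]
    (Z : Set X) (hZclosed : IsClosed Z) (hZconn : IsConnected Z)
    (r : ℝ) (hr : 0 < r) :
    ProxRegular Z r ↔
      ∀ y : X, infDist y Z < r →
        ∃! x : X, x ∈ Z ∧ ‖y - x‖ = infDist y Z ∧
          ∀ z ∈ Z, ⟪y - x, x - z⟫ + ‖y - x‖ / (2 * r) * ‖x - z‖ ^ 2 ≥ 0 :=
  prox_regular_iff_unique_proj_general Z hZclosed hZconn r hr
end

section
/- Let Hypothesis (A) hold. Then the boundary of Z is exactly ∂Z = {x ∈ X : G(x) = 1}; in particular, a point x ∈ X belongs to the interior of Z if and only if G(x) < 1. -/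
open MeasureTheory Set Filter Metric
open scoped RealInnerProductSpace Topology

/-- `g` is the (Gâteaux-type) gradient of `G` at `x`: all directional derivatives exist and
are represented by the inner product with `g`. -/
def HasDirGradientAt {X : Type*} [NormedAddCommGroup X] [InnerProductSpace ℝ X]
    (G : X → ℝ) (g : X) (x : X) : Prop :=
  ∀ y : X, Tendsto (fun t : ℝ => (G (x + t • y) - G x) / t) (𝓝[≠] (0:ℝ)) (𝓝 ⟪g, y⟫)

/-! At a point of the level set `{G = 1}` the gradient is nonzero, so `G` has no local maximum
there: such a point is a limit of points with `G > 1` and cannot lie in the interior of `Z`.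
Hence `interior Z = {G < 1}`, and since `Z` is closed, `frontier Z = Z \ interior Z = {G = 1}`. -/

section Gradient

variable {X : Type*} [NormedAddCommGroup X] [InnerProductSpace ℝ X] {G : X → ℝ} {g x : X}

theorem HasDirGradientAt.hasDerivAt_comp_add_smul (h : HasDirGradientAt G g x) (y : X) :
    HasDerivAt (fun t : ℝ => G (x + t • y)) ⟪g, y⟫ 0 := by
  rw [hasDerivAt_iff_tendsto_slope]
  refine (h y).congr fun t => ?_
  simp [slope_def_field]

theorem HasDirGradientAt.eq_zero_of_isLocalMax (h : HasDirGradientAt G g x)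
    (hmax : IsLocalMax G x) : g = 0 := by
  have hline (y : X) : IsLocalMax (fun t : ℝ => G (x + t • y)) 0 := by
    have hmax' : IsLocalMax G ((fun t : ℝ => x + t • y) 0) := by simpa using hmax
    exact IsLocalMax.comp_continuous (g := fun t : ℝ => x + t • y) hmax' (by fun_prop)
  exact inner_self_eq_zero.1 ((hline g).hasDerivAt_eq_zero (h.hasDerivAt_comp_add_smul g))

end Gradient

section Sublevel

variable {X : Type*} [TopologicalSpace X] {f : X → ℝ} {a : ℝ}

theorem interior_setOf_le_eq_of_not_isLocalMax (hf : Continuous f)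
    (hmax : ∀ x, f x = a → ¬IsLocalMax f x) : interior {x | f x ≤ a} = {x | f x < a} := by
  refine Subset.antisymm (fun x hx => ?_)
    (interior_maximal (ofPred_subset_ofPred.2 fun _ => le_of_lt) (isOpen_lt hf continuous_const))
  have hle : f x ≤ a := by simpa using interior_subset hx
  rcases hle.lt_or_eq with hlt | heq
  · exact hlt
  · refine absurd ?_ (hmax x heq)
    filter_upwards [mem_interior_iff_mem_nhds.1 hx] with y hy
    exact heq ▸ hy

theorem frontier_setOf_le_eq_of_not_isLocalMax (hf : Continuous f)
    (hmax : ∀ x, f x = a → ¬IsLocalMax f x) : frontier {x | f x ≤ a} = {x | f x = a} := by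
  rw [(isClosed_le hf continuous_const).frontier_eq,
    interior_setOf_le_eq_of_not_isLocalMax hf hmax]
  ext x
  simp only [Set.mem_sdiff, mem_ofPred_eq, not_lt]
  exact ⟨fun h => le_antisymm h.1 h.2, fun h => ⟨h.le, h.ge⟩⟩

end Sublevel

theorem frontier_sublevel_eq_general
    {X : Type*} [NormedAddCommGroup X] [InnerProductSpace ℝ X]
    (G : X → ℝ)
    (G' : X → X) (hgrad : ∀ x, HasDirGradientAt G (G' x) x)
    (Z : Set X) (hZ : Z = {z : X | G z ≤ 1})
    (c : ℝ) (hc : 0 < c)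
    (hyp1 : ∀ x : X, G x = 1 → c ≤ ‖G' x‖)
    (hGcont : Continuous G)
    : frontier Z = {x : X | G x = 1} ∧ ∀ x : X, x ∈ interior Z ↔ G x < 1 := by
  subst hZ
  have hmax (x : X) (hx : G x = 1) : ¬IsLocalMax G x := fun hlocal =>
    (hc.trans_le (hyp1 x hx)).ne' (by rw [(hgrad x).eq_zero_of_isLocalMax hlocal, norm_zero])
  exact ⟨frontier_setOf_le_eq_of_not_isLocalMax hGcont hmax,
    fun x => Set.ext_iff.1 (interior_setOf_le_eq_of_not_isLocalMax hGcont hmax) x⟩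

/-- Under Hypothesis (A) (with `G` continuous), the boundary of `Z` is exactly
`{x : G x = 1}`, and `x ∈ interior Z ↔ G x < 1`. -/
theorem frontier_sublevel_eq
    {X : Type*} [NormedAddCommGroup X] [InnerProductSpace ℝ X] [CompleteSpace X]
    (G : X → ℝ) (hGnonneg : ∀ x, 0 ≤ G x)
    (G' : X → X) (hgrad : ∀ x, HasDirGradientAt G (G' x) x)
    (Z : Set X) (hZ : Z = {z : X | G z ≤ 1})
    (lam c : ℝ) (hlam : 0 < lam) (hc : 0 < c)
    (μ : ℝ → ℝ) (hμcont : ContinuousOn μ (Ici 0)) (hμmono : StrictMonoOn μ (Ici 0))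
    (hμnonneg : ∀ s ∈ Ici (0:ℝ), 0 ≤ μ s) (hμ0 : μ 0 = 0) (hμtop : Tendsto μ atTop atTop)
    (hyp1 : ∀ x : X, G x = 1 → c ≤ ‖G' x‖)
    (hyp2 : ∀ x ∈ Z, ∀ y ∈ Z, ‖G' x - G' y‖ ≤ μ ‖x - y‖)
    (hyp3 : ∀ x ∈ frontier Z, ∀ z ∈ Z, ⟪G' x - G' z, x - z⟫ ≥ -lam * ‖x - z‖ ^ 2)
    (hGcont : Continuous G)
    : frontier Z = {x : X | G x = 1} ∧ ∀ x : X, x ∈ interior Z ↔ G x < 1 :=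
  frontier_sublevel_eq_general G G' hgrad Z hZ c hc hyp1 hGcont
end

section
/- Let Hypothesis (B) hold. Then for every K > 0 there exists a constant C_K > 0 such that for all w₁, w₂ ∈ W with max{|w₁|_W, |w₂|_W} ≤ K one has d_H(Z(w₁), Z(w₂)) ≤ C_K |w₁ − w₂|_W, where d_H denotes the Hausdorff distance d_H(Z(w₁), Z(w₂)) := max{ sup_{z ∈ Z(w₁)} dist(z, Z(w₂)), sup_{z' ∈ Z(w₂)} dist(z', Z(w₁)) }. -/
/-!
Move the parameter along the segment `s ↦ w₁ + s • (w₂ - w₁)` and drag a point of `Z(w₁)` along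
so that it stays in the moving sublevel set. In the interior of `Z` the point may stay put; on
its boundary `|∇ₓG| ≥ c`, so a step of length `t` against the gradient lowers `G` by about
`c t / 2`, which pays for the increase `≤ L |w - w'|` caused by advancing the parameter. Hence the
point can always advance with speed `2 L |w₁ - w₂| / c`, and a Zorn (Brezis–Browder) argument in
the complete space `X` turns these local steps into a path reaching `Z(w₂)`.
-/

open Set Filter Metric
open scoped RealInnerProductSpace Topology

def ConeLE {E : Type*} [PseudoMetricSpace E] (C : ℝ) (p q : ℝ × E) : Prop :=
  p.1 ≤ q.1 ∧ dist p.2 q.2 ≤ C * (q.1 - p.1)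

namespace ConeLE

variable {E : Type*} [PseudoMetricSpace E] {C : ℝ} {p q r : ℝ × E}

theorem refl (p : ℝ × E) : ConeLE C p p := ⟨le_rfl, by simp⟩

theorem trans (hpq : ConeLE C p q) (hqr : ConeLE C q r) : ConeLE C p r := by
  refine ⟨hpq.1.trans hqr.1, (dist_triangle _ q.2 _).trans ?_⟩
  rw [show C * (r.1 - p.1) = C * (q.1 - p.1) + C * (r.1 - q.1) by ring]
  exact add_le_add hpq.2 hqr.2

theorem dist_le (h : ConeLE C p q) : dist p.2 q.2 ≤ C * dist p.1 q.1 := by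
  rw [Real.dist_eq, abs_sub_comm, abs_of_nonneg (sub_nonneg.2 h.1)]
  exact h.2

theorem isClosed_setOf (p : ℝ × E) : IsClosed {q : ℝ × E | ConeLE C p q} :=
  (isClosed_le continuous_const continuous_fst).inter
    (isClosed_le (continuous_const.dist continuous_snd)
      (continuous_const.mul (continuous_fst.sub continuous_const)))

end ConeLE

section Continuation

variable {E : Type*} [PseudoMetricSpace E] [CompleteSpace E] {C : ℝ}

/-- A chain for `ConeLE C` is the graph of a `C`-Lipschitz map, which extends to the supremum of
its domain by completeness. -/
theorem IsChain.exists_coneLE_mem_closure {c : Set (ℝ × E)} (hc : IsChain (ConeLE C) c)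
    (hne : c.Nonempty) (hbdd : BddAbove (Prod.fst '' c)) :
    ∃ q ∈ closure c, ∀ p ∈ c, ConeLE C p q := by
  have hlip : ∀ p ∈ c, ∀ q ∈ c, dist p.2 q.2 ≤ C * dist p.1 q.1 := by
    intro p hp q hq
    rcases eq_or_ne p q with rfl | hpq
    · simp
    rcases hc hp hq hpq with h | h
    · exact h.dist_le
    · rw [dist_comm, dist_comm p.1]
      exact h.dist_le
  obtain ⟨u, huc, hu⟩ : ∃ u : ℕ → ℝ × E, (∀ n, u n ∈ c) ∧
      Tendsto (fun n => (u n).1) atTop (𝓝 (sSup (Prod.fst '' c))) := by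
    obtain ⟨v, hv, hvlim⟩ := mem_closure_iff_seq_limit.1 (csSup_mem_closure (hne.image _) hbdd)
    choose u huc hu using hv
    exact ⟨u, huc, by simpa only [hu] using hvlim⟩
  have hcauchy : CauchySeq fun n => (u n).2 := by
    refine Metric.cauchySeq_iff'.2 fun ε hε => ?_
    obtain ⟨N, hN⟩ := Metric.cauchySeq_iff'.1 hu.cauchySeq (ε / (|C| + 1)) (by positivity)
    refine ⟨N, fun n hn => (hlip _ (huc n) _ (huc N)).trans_lt ?_⟩
    calc C * dist (u n).1 (u N).1 ≤ (|C| + 1) * dist (u n).1 (u N).1 := by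
          gcongr; linarith [le_abs_self C]
      _ < (|C| + 1) * (ε / (|C| + 1)) := by gcongr; exact hN n hn
      _ = ε := by field_simp
  obtain ⟨x, hx⟩ := cauchySeq_tendsto_of_complete hcauchy
  have hlim : Tendsto u atTop (𝓝 (sSup (Prod.fst '' c), x)) := hu.prodMk_nhds hx
  refine ⟨_, mem_closure_of_tendsto hlim (Eventually.of_forall huc), fun p hp => ?_⟩
  have hle : p.1 ≤ sSup (Prod.fst '' c) := le_csSup hbdd (mem_image_of_mem _ hp)
  have hdist : dist p.2 x ≤ C * dist p.1 (sSup (Prod.fst '' c)) :=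
    (isClosed_le (continuous_const.dist continuous_snd)
      (continuous_const.mul (continuous_const.dist continuous_fst))).mem_of_tendsto hlim
      (Eventually.of_forall fun n => hlip p hp _ (huc n))
  refine ⟨hle, ?_⟩
  rwa [Real.dist_eq, abs_sub_comm, abs_of_nonneg (sub_nonneg.2 hle)] at hdist

theorem exists_coneLE_of_forall_step {S : Set (ℝ × E)} (hS : IsClosed S) {b : ℝ}
    (hSb : ∀ p ∈ S, p.1 ≤ b) {p₀ : ℝ × E} (hp₀ : p₀ ∈ S)
    (hstep : ∀ p ∈ S, p.1 < b → ∃ q ∈ S, p.1 < q.1 ∧ ConeLE C p q) :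
    ∃ x, (b, x) ∈ S ∧ ConeLE C p₀ (b, x) := by
  let T := S ∩ {p | ConeLE C p₀ p}
  have hT : IsClosed T := hS.inter (ConeLE.isClosed_setOf p₀)
  have hchain : ∀ c : Set T, IsChain (fun p q : T => ConeLE C p.1 q.1) c →
      ∃ ub : T, ∀ p ∈ c, ConeLE C p.1 ub.1 := by
    intro c hc
    rcases c.eq_empty_or_nonempty with rfl | hne
    · exact ⟨⟨p₀, hp₀, ConeLE.refl p₀⟩, by simp⟩
    obtain ⟨q, hq, hub⟩ := (hc.image_of_map_rel _ _ Subtype.val fun _ _ h => h)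
      |>.exists_coneLE_mem_closure (hne.image _) ⟨b, by
        rintro _ ⟨_, ⟨p, -, rfl⟩, rfl⟩
        exact hSb _ p.2.1⟩
    refine ⟨⟨q, closure_minimal (image_subset_iff.2 fun p _ => p.2) hT hq⟩, fun p hp => ?_⟩
    exact hub p (mem_image_of_mem _ hp)
  obtain ⟨m, hm⟩ := exists_maximal_of_chains_bounded hchain fun h h' => h.trans h'
  have hmb : m.1.1 = b := by
    by_contra hne
    obtain ⟨q, hqS, hlt, hmq⟩ := hstep m.1 m.2.1 ((hSb _ m.2.1).lt_of_ne hne)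
    exact hlt.not_ge (hm ⟨q, hqS, m.2.2.trans hmq⟩ hmq).1
  have hm_eq : (b, m.1.2) = m.1 := Prod.ext hmb.symm rfl
  exact ⟨m.1.2, hm_eq ▸ m.2.1, hm_eq ▸ m.2.2⟩

end Continuation

theorem eventually_le_sub_mul_of_tendsto_slope {X : Type*} [AddCommGroup X] [Module ℝ X]
    {F : X → ℝ} {x y : X} {ℓ κ : ℝ}
    (hF : Tendsto (fun t : ℝ => (F (x + t • y) - F x) / t) (𝓝[≠] 0) (𝓝 ℓ)) (hℓ : ℓ < -κ) :
    ∀ᶠ t in 𝓝[>] 0, F (x + t • y) ≤ F x - κ * t := by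
  filter_upwards [(hF.eventually_lt_const hℓ).filter_mono (nhdsGT_le_nhdsNE 0),
    self_mem_nhdsWithin] with t ht (htpos : 0 < t)
  rw [div_lt_iff₀ htpos] at ht
  linarith

theorem exists_descent_direction {X : Type*} [NormedAddCommGroup X] [InnerProductSpace ℝ X]
    {F : X → ℝ} {x g : X} {a c : ℝ} (hc : 0 < c) (hx : F x ≤ a)
    (hF : ∀ y, Tendsto (fun t : ℝ => (F (x + t • y) - F x) / t) (𝓝[≠] 0) (𝓝 ⟪g, y⟫))
    (hg : F x = a → c ≤ ‖g‖) :
    ∃ u : X, ‖u‖ ≤ 1 ∧ ∀ᶠ t in 𝓝[>] 0, F (x + t • u) ≤ a - c / 2 * t := by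
  rcases hx.lt_or_eq with hlt | heq
  · have hlim : Tendsto (fun t : ℝ => a - c / 2 * t) (𝓝[>] 0) (𝓝 a) :=
      ((Continuous.tendsto' (by fun_prop) 0 a (by simp))).mono_left nhdsWithin_le_nhds
    refine ⟨0, by simp, ?_⟩
    filter_upwards [hlim.eventually (eventually_ge_nhds hlt)] with t ht
    simpa using ht
  · have hgc := hg heq
    have hg0 : ‖g‖ ≠ 0 := (hc.trans_le hgc).ne'
    refine ⟨-(‖g‖⁻¹ • g), by simp [norm_smul, hg0], heq ▸ ?_⟩
    refine eventually_le_sub_mul_of_tendsto_slope (hF _) ?_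
    rw [inner_neg_right, real_inner_smul_right, real_inner_self_eq_norm_sq, sq,
      inv_mul_cancel_left₀ hg0]
    linarith

theorem exists_coneLE_step {X : Type*} [SeminormedAddCommGroup X] [NormedSpace ℝ X]
    {Φ : ℝ → X → ℝ} {M κ a b s : ℝ} {x u : X} (hM : 0 < M) (hκ : 0 < κ)
    (hΦ : ∀ x s s', Φ s' x ≤ Φ s x + M * |s' - s|) (hs : s < b) (hu : ‖u‖ ≤ 1)
    (hdesc : ∀ᶠ t in 𝓝[>] 0, Φ s (x + t • u) ≤ a - κ * t) :
    ∃ q : ℝ × X, q.1 ≤ b ∧ Φ q.1 q.2 ≤ a ∧ s < q.1 ∧ ConeLE (M / κ) (s, x) q := by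
  have hsmall : ∀ᶠ t in 𝓝[>] (0 : ℝ), t ∈ Ioi 0 ∧ t ≤ M / κ * (b - s) :=
    eventually_mem_nhdsWithin.and
      (nhdsWithin_le_nhds (eventually_le_nhds (by have := sub_pos.2 hs; positivity)))
  obtain ⟨t, ⟨ht : 0 < t, htb⟩, hΦt⟩ := (hsmall.and hdesc).exists
  have hΔ : M / κ * (κ / M * t) = t := by field_simp
  have hΔpos : 0 < κ / M * t := by positivity
  refine ⟨(s + κ / M * t, x + t • u), ?_, ?_, by simpa using hΔpos, ?_⟩
  · have : κ / M * t ≤ κ / M * (M / κ * (b - s)) := by gcongr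
    rw [← mul_assoc, div_mul_div_cancel₀ hM.ne', div_self hκ.ne', one_mul] at this
    dsimp only
    linarith
  · calc Φ (s + κ / M * t) (x + t • u) ≤ Φ s (x + t • u) + M * |s + κ / M * t - s| := hΦ _ _ _
      _ ≤ a - κ * t + M * (κ / M * t) := by
          rw [add_sub_cancel_left, abs_of_pos hΔpos]; linarith
      _ = a := by field_simp; ring
  · refine ⟨by simpa using hΔpos.le, ?_⟩
    calc dist x (x + t • u) = t * ‖u‖ := by
          rw [dist_eq_norm, sub_add_cancel_left, norm_neg, norm_smul, Real.norm_of_nonneg ht.le]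
      _ ≤ t := mul_le_of_le_one_right ht.le hu
      _ = M / κ * ((s + κ / M * t, x + t • u).1 - (s, x).1) := by simp [hΔ]

theorem exists_dist_le_of_le_one {X W : Type*} [NormedAddCommGroup X] [InnerProductSpace ℝ X]
    [CompleteSpace X] [NormedAddCommGroup W] [NormedSpace ℝ W]
    {G : X → W → ℝ} {Gx : X → W → X} {c L : ℝ} (hc : 0 < c) (hL : 0 < L)
    (hG : Continuous fun p : X × W => G p.1 p.2)
    (hgrad : ∀ w x, G x w ≤ 1 → ∀ y,
      Tendsto (fun t : ℝ => (G (x + t • y) w - G x w) / t) (𝓝[≠] 0) (𝓝 ⟪Gx x w, y⟫))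
    (hgrad_norm : ∀ x w, G x w = 1 → c ≤ ‖Gx x w‖)
    (hGw : ∀ x w w', |G x w - G x w'| ≤ L * ‖w - w'‖)
    {w₁ w₂ : W} (hw : w₁ ≠ w₂) {z : X} (hz : G z w₁ ≤ 1) :
    ∃ x, G x w₂ ≤ 1 ∧ dist z x ≤ 2 * L / c * dist w₁ w₂ := by
  set δ := dist w₁ w₂
  have hδ : 0 < δ := dist_pos.2 hw
  let Φ : ℝ → X → ℝ := fun s x => G x (AffineMap.lineMap w₁ w₂ s)
  have hΦ : ∀ x s s', Φ s' x ≤ Φ s x + L * δ * |s' - s| := by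
    intro x s s'
    have := (abs_le.1 (hGw x (AffineMap.lineMap w₁ w₂ s') (AffineMap.lineMap w₁ w₂ s))).2
    rw [← dist_eq_norm, dist_lineMap_lineMap, Real.dist_eq] at this
    linarith
  let S : Set (ℝ × X) := {p | p.1 ≤ 1 ∧ Φ p.1 p.2 ≤ 1}
  have hS : IsClosed S :=
    (isClosed_le continuous_fst continuous_const).inter
      (isClosed_le (hG.comp (continuous_snd.prodMk
        (AffineMap.lineMap_continuous.comp continuous_fst))) continuous_const)
  have hstep : ∀ p ∈ S, p.1 < 1 → ∃ q ∈ S, p.1 < q.1 ∧ ConeLE (L * δ / (c / 2)) p q := by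
    rintro ⟨s, x⟩ ⟨-, hx⟩ hs
    obtain ⟨u, hu, hdesc⟩ := exists_descent_direction hc hx (hgrad _ x hx) (hgrad_norm x _)
    obtain ⟨q, hq1, hqΦ, hsq, hcone⟩ :=
      exists_coneLE_step (by positivity) (by positivity) hΦ hs hu hdesc
    exact ⟨q, ⟨hq1, hqΦ⟩, hsq, hcone⟩
  obtain ⟨x, ⟨-, hx⟩, -, hzx⟩ := exists_coneLE_of_forall_step hS (fun p hp => hp.1)
    (p₀ := (0, z)) ⟨zero_le_one, by simpa [Φ] using hz⟩ hstep
  refine ⟨x, by simpa [Φ] using hx, ?_⟩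
  calc dist z x ≤ L * δ / (c / 2) * (1 - 0) := hzx
    _ = 2 * L / c * δ := by ring

theorem hausdorff_lipschitz_general
    {X W : Type*} [NormedAddCommGroup X] [InnerProductSpace ℝ X] [CompleteSpace X]
    [NormedAddCommGroup W] [NormedSpace ℝ W]
    (G : X → W → ℝ)
    (hGlip : LocallyLipschitz (fun p : X × W => G p.1 p.2))
    (Zs : W → Set X) (hZ : ∀ w, Zs w = {z : X | G z w ≤ 1})
    (Gx : X → W → X)
    (hgradx : ∀ w : W, ∀ z ∈ Zs w, ∀ y : X,
      Tendsto (fun t : ℝ => (G (z + t • y) w - G z w) / t) (𝓝[≠] (0:ℝ)) (𝓝 ⟪Gx z w, y⟫))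
    (c L : ℝ) (hc : 0 < c) (hL : 0 < L)
    (hyp1 : ∀ (x : X) (w : W), G x w = 1 → c ≤ ‖Gx x w‖)
    (hyp4 : ∀ (x : X) (w w' : W), |G x w - G x w'| ≤ L * ‖w - w'‖)
    : ∀ K > (0:ℝ), ∃ CK > (0:ℝ), ∀ w₁ w₂ : W, max ‖w₁‖ ‖w₂‖ ≤ K →
        hausdorffDist (Zs w₁) (Zs w₂) ≤ CK * ‖w₁ - w₂‖ := by
  obtain rfl : Zs = fun w => {z : X | G z w ≤ 1} := funext hZ
  have hnear : ∀ w w' : W, w ≠ w' → ∀ z, G z w ≤ 1 →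
      ∃ x, G x w' ≤ 1 ∧ dist z x ≤ 2 * L / c * ‖w - w'‖ := fun w w' hw z hz => by
    simpa only [dist_eq_norm] using
      exists_dist_le_of_le_one hc hL hGlip.continuous hgradx hyp1 hyp4 hw hz
  intro K _
  refine ⟨2 * L / c, by positivity, fun w₁ w₂ _ => ?_⟩
  rcases eq_or_ne w₁ w₂ with rfl | hne
  · simp
  refine hausdorffDist_le_of_mem_dist (by positivity) (fun z hz => hnear w₁ w₂ hne z hz)
    fun z hz => ?_
  obtain ⟨x, hx, hzx⟩ := hnear w₂ w₁ hne.symm z hz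
  exact ⟨x, hx, by rwa [norm_sub_rev]⟩

/-- Under Hypothesis (B), for every `K > 0` the map `w ↦ Z(w)` is Lipschitz in the
Hausdorff distance on the ball of radius `K`. -/
theorem hausdorff_lipschitz
    {X W : Type*} [NormedAddCommGroup X] [InnerProductSpace ℝ X] [CompleteSpace X]
    [NormedAddCommGroup W] [NormedSpace ℝ W] [CompleteSpace W]
    (G : X → W → ℝ) (hGnonneg : ∀ (x : X) (w : W), 0 ≤ G x w)
    (hGlip : LocallyLipschitz (fun p : X × W => G p.1 p.2))
    (Zs : W → Set X) (hZ : ∀ w, Zs w = {z : X | G z w ≤ 1})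
    (Gx : X → W → X)
    (hgradx : ∀ w : W, ∀ z ∈ Zs w, ∀ y : X,
      Tendsto (fun t : ℝ => (G (z + t • y) w - G z w) / t) (𝓝[≠] (0:ℝ)) (𝓝 ⟪Gx z w, y⟫))
    (lam c L : ℝ) (hlam : 0 < lam) (hc : 0 < c) (hL : 0 < L)
    (μ₁ : W → ℝ → ℝ) (μ₂ : ℝ → ℝ)
    (hμ₁zero : ∀ w, μ₁ w 0 = 0) (hμ₂zero : μ₂ 0 = 0)
    (hμ₁top : ∀ w, Tendsto (μ₁ w) atTop atTop) (hμ₂top : Tendsto μ₂ atTop atTop)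
    (hyp1 : ∀ (x : X) (w : W), G x w = 1 → c ≤ ‖Gx x w‖)
    (hyp2 : ∀ w : W, ∀ x ∈ Zs w, ∀ y ∈ Zs w, ‖Gx x w - Gx y w‖ ≤ μ₁ w ‖x - y‖)
    (hyp3 : ∀ w : W, ∀ x ∈ frontier (Zs w), ∀ z ∈ Zs w,
      ⟪Gx x w - Gx z w, x - z⟫ ≥ -lam * ‖x - z‖ ^ 2)
    (hyp4 : ∀ (x : X) (w w' : W), |G x w - G x w'| ≤ L * ‖w - w'‖)
    (hyp5 : ∀ ρ > (0:ℝ), ∀ (w : W) (x : X), ρ ≤ infDist x (Zs w) → μ₂ ρ ≤ G x w - 1)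
    : ∀ K > (0:ℝ), ∃ CK > (0:ℝ), ∀ w₁ w₂ : W, max ‖w₁‖ ‖w₂‖ ≤ K →
        hausdorffDist (Zs w₁) (Zs w₂) ≤ CK * ‖w₁ - w₂‖ :=
  hausdorff_lipschitz_general G hGlip Zs hZ Gx hgradx c L hc hL hyp1 hyp4
end

section
/- Let Hypothesis (B) hold, let the partial gradient ∇_wG : X × W → W' be continuous, let u ∈ W^{1,1}(0,T; X), w ∈ W^{1,1}(0,T; W), x₀ ∈ Z(w(0)), and let ξ ∈ W^{1,1}(0,T; X) be the solution of the sweeping process (GP) with x(t) = u(t) − ξ(t). Define s(t) = [∇ₓG(x(t), w(t)) / (dist(x(t), ∂Z(w(t))) + |∇ₓG(x(t), w(t))|²)] · ⟨w'(t), ∇_wG(x(t), w(t))⟩_{W,W'}. Then ⟨ξ'(t), x'(t) + s(t)⟩ = 0 for almost all t ∈ (0,T). -/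
/-!
At almost every `t` the data `u`, `w`, `ξ` are differentiable and `ξ'(t)` is an `r`-proximal
normal to `Z(w(t))` at `x(t)`. If `x(t)` is interior to `Z(w(t))`, this forces `ξ'(t) = 0`.
Otherwise `G(x(t), w(t)) = 1` and `x(t)` lies on `∂Z(w(t))`, so the distance term vanishes;
every strict descent direction of `G(·, w(t))` enters `Z(w(t))`, so the proximal normal
inequality makes `ξ'(t)` a multiple of `∇ₓG(x(t), w(t))`. Finally `s ↦ G(x(s), w(s))` attains
its maximum `1` at `t`, so by the chain rule `⟨∇ₓG, x'(t)⟩ + ⟨w'(t), ∇_wG⟩ = 0`, which is the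
claim up to that multiple.
-/

open MeasureTheory Set Filter Metric
open scoped RealInnerProductSpace Topology

/-- `f ∈ W^{1,1}(0,T;Y)` with a.e. derivative `f'`: `f'` is Bochner integrable on `(0,T)`
and `f t = f 0 + ∫₀ᵗ f'` on `[0,T]`. -/
def IsW11 {Y : Type*} [NormedAddCommGroup Y] [NormedSpace ℝ Y] (T : ℝ) (f f' : ℝ → Y) : Prop :=
  IntegrableOn f' (Ioo 0 T) ∧ ∀ t ∈ Icc 0 T, f t = f 0 + ∫ s in (0:ℝ)..t, f' s

/-- Solution of the sweeping process (GP) with data `(u, w, x₀)`, where `ξ'` is the a.e.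
derivative of `ξ` and `x(t) = u(t) - ξ(t)`. -/
def IsGPSol {X W : Type*} [NormedAddCommGroup X] [InnerProductSpace ℝ X]
    (T r : ℝ) (Zs : W → Set X) (u : ℝ → X) (w : ℝ → W) (x₀ : X) (ξ ξ' : ℝ → X) : Prop :=
  (∀ t ∈ Icc 0 T, u t - ξ t ∈ Zs (w t)) ∧ u 0 - ξ 0 = x₀ ∧
    ∀ᵐ t ∂(volume.restrict (Ioo 0 T)), ∀ z ∈ Zs (w t),
      ⟪(u t - ξ t) - z, ξ' t⟫ + ‖ξ' t‖ / (2 * r) * ‖(u t - ξ t) - z‖ ^ 2 ≥ 0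

theorem IsW11.ae_hasDerivAt {Y : Type*} [NormedAddCommGroup Y] [NormedSpace ℝ Y]
    [CompleteSpace Y] {T : ℝ} {f f' : ℝ → Y} (hf : IsW11 T f f') :
    ∀ᵐ t ∂(volume.restrict (Ioo 0 T)), HasDerivAt f (f' t) t := by
  rcases le_or_gt T 0 with hT | hT
  · simp [Ioo_eq_empty (not_lt.2 hT)]
  have hint : IntervalIntegrable f' volume 0 T :=
    (intervalIntegrable_iff_integrableOn_Ioo_of_le hT.le).2 hf.1
  filter_upwards [ae_restrict_of_ae hint.ae_hasDerivAt_integral,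
    ae_restrict_mem measurableSet_Ioo] with t hderiv ht
  have hmem : t ∈ uIcc 0 T := uIcc_of_le hT.le ▸ Ioo_subset_Icc_self ht
  refine ((hderiv hmem 0 left_mem_uIcc).const_add (f 0)).congr_of_eventuallyEq ?_
  filter_upwards [Icc_mem_nhds ht.1 ht.2] with s hs using hf.2 s hs

section LineDeriv

variable {E : Type*} [NormedAddCommGroup E] [NormedSpace ℝ E]

theorem hasLineDerivAt_iff_tendsto_div {f : E → ℝ} {f' : ℝ} {x v : E} :
    HasLineDerivAt ℝ f f' x v ↔
      Tendsto (fun t : ℝ => (f (x + t • v) - f x) / t) (𝓝[≠] 0) (𝓝 f') := by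
  simp only [hasLineDerivAt_iff_tendsto_slope_zero, smul_eq_mul, inv_mul_eq_div]

theorem HasLineDerivAt.eventually_lt_of_neg {f : E → ℝ} {f' : ℝ} {x v : E}
    (hf : HasLineDerivAt ℝ f f' x v) (hf' : f' < 0) :
    ∀ᶠ t : ℝ in 𝓝[>] 0, f (x + t • v) < f x := by
  have hslope : Tendsto (fun t : ℝ => t⁻¹ • (f (x + t • v) - f x)) (𝓝[>] 0) (𝓝 f') :=
    hf.tendsto_slope_zero.mono_left (nhdsGT_le_nhdsNE 0)
  filter_upwards [hslope.eventually_lt_const hf', self_mem_nhdsWithin] with t hneg ht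
  rwa [smul_neg_iff_of_pos_left (inv_pos.2 ht), sub_neg] at hneg

theorem HasLineDerivAt.hasDerivAt_add_smul {F : Type*} [NormedAddCommGroup F] [NormedSpace ℝ F]
    {f : E → F} {f' : F} {x v : E} {s : ℝ} (hf : HasLineDerivAt ℝ f f' (x + s • v) v) :
    HasDerivAt (fun t : ℝ => f (x + t • v)) f' s := by
  have h : HasDerivAt (fun t : ℝ => f (x + s • v + t • v)) f' (s - s) := by
    rwa [sub_self]
  convert h.comp_sub_const s s using 3 with t
  rw [add_assoc, ← add_smul, add_sub_cancel]

theorem LipschitzOnWith.hasDerivAt_comp_of_hasLineDerivAt {F : Type*} [NormedAddCommGroup F]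
    [NormedSpace ℝ F] {f : E → F} {K : NNReal} {U : Set E} (hf : LipschitzOnWith K f U)
    {γ : ℝ → E} {v : E} {t : ℝ} (hU : U ∈ 𝓝 (γ t)) (hγ : HasDerivAt γ v t) {f' : F}
    (hf' : HasLineDerivAt ℝ f f' (γ t) v) :
    HasDerivAt (fun s => f (γ s)) f' t := by
  -- Along the tangent line `ℓ` the claim is `hf'`, and `f ∘ γ - f ∘ ℓ = O(γ - ℓ) = o(s - t)`.
  set ℓ : ℝ → E := fun s => γ t + (s - t) • v
  have hℓ : Tendsto ℓ (𝓝 t) (𝓝 (γ t)) := by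
    have : Continuous ℓ := continuous_const.add ((continuous_sub_right t).smul continuous_const)
    simpa [ℓ] using this.tendsto t
  have hline : (fun s => f (ℓ s) - f (γ t) - (s - t) • f') =o[𝓝 t] fun s => s - t :=
    (hasLineDerivAt_iff_isLittleO_nhds_zero.1 hf').comp_tendsto
      (tendsto_sub_nhds_zero_iff.2 tendsto_id)
  have hcurve : (fun s => f (γ s) - f (ℓ s)) =o[𝓝 t] fun s => s - t := by
    refine Asymptotics.IsBigO.trans_isLittleO ?_ (hasDerivAt_iff_isLittleO.1 hγ)
    refine Asymptotics.IsBigO.of_bound K ?_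
    filter_upwards [hγ.continuousAt hU, hℓ hU] with s hs hs'
    rw [sub_sub]
    exact hf.norm_sub_le hs hs'
  rw [hasDerivAt_iff_isLittleO]
  refine (hcurve.add hline).congr_left fun s => ?_
  abel

theorem exists_sub_eq_mul_of_hasLineDerivAt {f g : E → ℝ} {v : E}
    (hf : ∀ x, HasLineDerivAt ℝ f (g x) x v) (x : E) (h : ℝ) :
    ∃ θ ∈ Icc (0 : ℝ) 1, f (x + h • v) - f x = h * g (x + (θ * h) • v) := by
  have hderiv : ∀ s : ℝ, HasDerivAt (fun s : ℝ => f (x + s • h • v)) (h * g (x + s • h • v)) s :=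
    fun s => ((hf _).smul h).hasDerivAt_add_smul
  obtain ⟨θ, hθ, hθeq⟩ := exists_hasDerivAt_eq_slope _ _ zero_lt_one
    (fun s _ => (hderiv s).continuousAt.continuousWithinAt) (fun s _ => hderiv s)
  refine ⟨θ, Ioo_subset_Icc_self hθ, ?_⟩
  simpa [smul_smul] using hθeq.symm

variable {W : Type*} [NormedAddCommGroup W] [NormedSpace ℝ W]

theorem hasLineDerivAt_prod_of_continuousAt {f g : E → W → ℝ} {x a : E} {w b : W} {D : ℝ}
    (h₁ : HasLineDerivAt ℝ (f · w) D x a) (h₂ : ∀ p q, HasLineDerivAt ℝ (f p) (g p q) q b)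
    (hg : ContinuousAt (fun p : E × W => g p.1 p.2) (x, w)) :
    HasLineDerivAt ℝ (fun p : E × W => f p.1 p.2) (D + g x w) (x, w) (a, b) := by
  -- The increment in `w` at `x + h • a` is `h * g` at an intermediate point, by the mean value
  -- theorem; continuity of `g` at `(x, w)` then gives the limit `g x w`.
  choose θ hθ hθeq using fun p => exists_sub_eq_mul_of_hasLineDerivAt (h₂ p) w
  set θ' : ℝ → ℝ := fun h => θ (x + h • a) h
  have hθ' : Tendsto (fun h => θ' h * h) (𝓝 0) (𝓝 0) := by
    refine squeeze_zero_norm (fun h => ?_) tendsto_norm_zero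
    rw [norm_mul]
    obtain ⟨h0, h1⟩ := hθ (x + h • a) h
    exact mul_le_of_le_one_left (norm_nonneg h) (by rwa [Real.norm_of_nonneg h0])
  have hpt : Tendsto (fun h : ℝ => (x + h • a, w + (θ' h * h) • b)) (𝓝 0) (𝓝 (x, w)) := by
    refine Tendsto.prodMk_nhds ?_ ?_
    · simpa using tendsto_const_nhds.add ((tendsto_id (x := 𝓝 (0 : ℝ))).smul_const a)
    · simpa using tendsto_const_nhds.add (hθ'.smul_const b)
  have hsnd : Tendsto (fun h : ℝ => h⁻¹ • (f (x + h • a) (w + h • b) - f (x + h • a) w))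
      (𝓝[≠] 0) (𝓝 (g x w)) := by
    refine ((hg.tendsto.comp hpt).mono_left nhdsWithin_le_nhds).congr' ?_
    filter_upwards [self_mem_nhdsWithin] with h hh
    simp only [Function.comp_apply, θ', hθeq, smul_eq_mul, inv_mul_cancel_left₀ hh]
  rw [hasLineDerivAt_iff_tendsto_slope_zero]
  refine (h₁.tendsto_slope_zero.add hsnd).congr fun h => ?_
  simp only [Prod.mk_add_mk, Prod.smul_mk, ← smul_add]
  abel_nf

theorem LocallyLipschitz.hasDerivAt_comp₂ {f g : E → W → ℝ}
    (hf : LocallyLipschitz fun p : E × W => f p.1 p.2) {x : ℝ → E} {w : ℝ → W} {a : E} {b : W}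
    {t D : ℝ} (hx : HasDerivAt x a t) (hw : HasDerivAt w b t)
    (h₁ : HasLineDerivAt ℝ (f · (w t)) D (x t) a) (h₂ : ∀ p q, HasLineDerivAt ℝ (f p) (g p q) q b)
    (hg : ContinuousAt (fun p : E × W => g p.1 p.2) (x t, w t)) :
    HasDerivAt (fun s => f (x s) (w s)) (D + g (x t) (w t)) t := by
  obtain ⟨K, U, hU, hK⟩ := hf (x t, w t)
  exact hK.hasDerivAt_comp_of_hasLineDerivAt (γ := fun s => (x s, w s)) hU (hx.prodMk hw)
    (hasLineDerivAt_prod_of_continuousAt h₁ h₂ hg)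

end LineDeriv

section ProxNormal

variable {X : Type*} [NormedAddCommGroup X] [InnerProductSpace ℝ X]

theorem exists_eq_smul_of_inner_nonpos {g v : X} (hg : g ≠ 0)
    (h : ∀ y, ⟪g, y⟫ < 0 → ⟪y, v⟫ ≤ 0) : ∃ α : ℝ, v = α • g := by
  -- Each `y ⊥ g` is a limit of the directions `y - ε • g`; apply this to `v - α • g`.
  have hg2 : 0 < ‖g‖ ^ 2 := by positivity
  have horth : ∀ y, ⟪g, y⟫ = 0 → ⟪y, v⟫ ≤ 0 := by
    intro y hy
    have hlim : Tendsto (fun ε : ℝ => ε * ⟪g, v⟫) (𝓝[>] 0) (𝓝 0) := by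
      simpa using ((continuous_mul_const ⟪g, v⟫).tendsto 0).mono_left nhdsWithin_le_nhds
    refine ge_of_tendsto hlim (eventually_nhdsWithin_of_forall fun ε (hε : 0 < ε) => ?_)
    have hneg : ⟪g, y - ε • g⟫ < 0 := by
      rw [inner_sub_right, inner_smul_right, real_inner_self_eq_norm_sq, hy]
      nlinarith
    have hle := h _ hneg
    rw [inner_sub_left, real_inner_smul_left, sub_nonpos] at hle
    exact hle
  set α := ⟪g, v⟫ / ‖g‖ ^ 2
  have hy : ⟪g, v - α • g⟫ = 0 := by
    rw [inner_sub_right, inner_smul_right, real_inner_self_eq_norm_sq, div_mul_cancel₀ _ hg2.ne',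
      sub_self]
  refine ⟨α, eq_of_sub_eq_zero (inner_self_eq_zero.1 (le_antisymm ?_ real_inner_self_nonneg))⟩
  calc ⟪v - α • g, v - α • g⟫ = ⟪v - α • g, v⟫ := by
        rw [inner_sub_right _ v, inner_smul_right, real_inner_comm g, hy, mul_zero, sub_zero]
    _ ≤ 0 := horth _ hy

/-- For `r > 0` and `v ≠ 0` this says that the open ball of radius `r` centred at
`x + r • (v / ‖v‖)` does not meet `Z`. -/
def IsProxNormal (Z : Set X) (r : ℝ) (x v : X) : Prop :=
  ∀ z ∈ Z, 0 ≤ ⟪x - z, v⟫ + ‖v‖ / (2 * r) * ‖x - z‖ ^ 2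

variable {Z : Set X} {r : ℝ} {x v : X}

theorem IsProxNormal.inner_nonpos_of_eventually_mem (hv : IsProxNormal Z r x v) {y : X}
    (hy : ∀ᶠ τ : ℝ in 𝓝[>] 0, x + τ • y ∈ Z) : ⟪y, v⟫ ≤ 0 := by
  set C := ‖v‖ / (2 * r) * ‖y‖ ^ 2
  have hlim : Tendsto (fun τ : ℝ => C * τ) (𝓝[>] 0) (𝓝 0) := by
    simpa using ((continuous_const_mul C).tendsto 0).mono_left nhdsWithin_le_nhds
  refine ge_of_tendsto hlim ?_
  filter_upwards [hy, self_mem_nhdsWithin] with τ hτ (hτpos : 0 < τ)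
  have h := hv _ hτ
  rw [sub_add_cancel_left, inner_neg_left, real_inner_smul_left, norm_neg, norm_smul,
    Real.norm_of_nonneg hτpos.le] at h
  refine le_of_mul_le_mul_left ?_ hτpos
  linarith

theorem IsProxNormal.eq_zero_of_mem_interior (hv : IsProxNormal Z r x v) (hx : x ∈ interior Z) :
    v = 0 := by
  have hline : Tendsto (fun τ : ℝ => x + τ • v) (𝓝 0) (𝓝 x) := by
    simpa using tendsto_const_nhds.add ((tendsto_id (x := 𝓝 (0 : ℝ))).smul_const v)
  have hmem : ∀ᶠ τ : ℝ in 𝓝[>] 0, x + τ • v ∈ Z :=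
    (hline.eventually (mem_interior_iff_mem_nhds.1 hx)).filter_mono nhdsWithin_le_nhds
  exact inner_self_eq_zero.1 (le_antisymm (hv.inner_nonpos_of_eventually_mem hmem)
    real_inner_self_nonneg)

theorem IsProxNormal.exists_eq_smul_of_hasLineDerivAt {f : X → ℝ} {c : ℝ} {g : X}
    (hv : IsProxNormal {z | f z ≤ c} r x v) (hx : f x ≤ c) (hg : g ≠ 0)
    (hf : ∀ y, HasLineDerivAt ℝ f ⟪g, y⟫ x y) : ∃ α : ℝ, v = α • g :=
  exists_eq_smul_of_inner_nonpos hg fun y hy => hv.inner_nonpos_of_eventually_mem <| by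
    filter_upwards [(hf y).eventually_lt_of_neg hy] with τ hτ using (hτ.trans_le hx).le

end ProxNormal

theorem orthogonality_identity_general
    {X W : Type*} [NormedAddCommGroup X] [InnerProductSpace ℝ X] [CompleteSpace X]
    [NormedAddCommGroup W] [NormedSpace ℝ W] [CompleteSpace W]
    (G : X → W → ℝ)
    (hGlip : LocallyLipschitz (fun p : X × W => G p.1 p.2))
    (Zs : W → Set X) (hZ : ∀ w, Zs w = {z : X | G z w ≤ 1})
    (Gx : X → W → X)
    (hgradx : ∀ w : W, ∀ z ∈ Zs w, ∀ y : X,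
      Tendsto (fun t : ℝ => (G (z + t • y) w - G z w) / t) (𝓝[≠] (0:ℝ)) (𝓝 ⟪Gx z w, y⟫))
    (lam c : ℝ) (hc : 0 < c)
    (hyp1 : ∀ (x : X) (w : W), G x w = 1 → c ≤ ‖Gx x w‖)
    (Gw : X → W → StrongDual ℝ W)
    (hgradw : ∀ (x : X) (w : W) (v : W),
      Tendsto (fun t : ℝ => (G x (w + t • v) - G x w) / t) (𝓝[≠] (0:ℝ)) (𝓝 (Gw x w v)))
    (hGwcont : Continuous (fun p : X × W => Gw p.1 p.2))
    (T : ℝ)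
    (u u' : ℝ → X) (hu : IsW11 T u u')
    (w w' : ℝ → W) (hw : IsW11 T w w')
    (x₀ : X)
    (ξ ξ' : ℝ → X) (hξ : IsW11 T ξ ξ')
    (hsol : IsGPSol T (c / lam) Zs u w x₀ ξ ξ') :
    ∀ᵐ t ∂(volume.restrict (Ioo 0 T)),
      ⟪ξ' t, (u' t - ξ' t) +
        (Gw (u t - ξ t) (w t) (w' t) /
            (infDist (u t - ξ t) (frontier (Zs (w t))) + ‖Gx (u t - ξ t) (w t)‖ ^ 2)) •
          Gx (u t - ξ t) (w t)⟫ = 0 := by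
  obtain rfl : Zs = fun w => {z | G z w ≤ 1} := funext hZ
  obtain ⟨hmem, -, hprox⟩ := hsol
  filter_upwards [hprox, hu.ae_hasDerivAt, hw.ae_hasDerivAt, hξ.ae_hasDerivAt,
    ae_restrict_mem measurableSet_Ioo] with t hprox hu' hw' hξ' ht
  set x := u t - ξ t
  replace hprox : IsProxNormal {z | G z (w t) ≤ 1} (c / lam) x (ξ' t) := hprox
  have hxZ : x ∈ {z | G z (w t) ≤ 1} := hmem t (Ioo_subset_Icc_self ht)
  by_cases hint : x ∈ interior {z | G z (w t) ≤ 1}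
  · rw [hprox.eq_zero_of_mem_interior hint, inner_zero_left]
  have hG1 : G x (w t) = 1 := (hxZ : G x (w t) ≤ 1).eq_of_not_lt fun hlt => hint <|
    lt_subset_interior_le (hGlip.continuous.comp (continuous_id.prodMk continuous_const))
      continuous_const hlt
  set g := Gx x (w t)
  have hg : g ≠ 0 := norm_pos_iff.1 (hc.trans_le (hyp1 _ _ hG1))
  have hGline : ∀ y, HasLineDerivAt ℝ (G · (w t)) ⟪g, y⟫ x y := fun y =>
    hasLineDerivAt_iff_tendsto_div.2 (hgradx _ _ hxZ y)
  obtain ⟨α, hα⟩ := hprox.exists_eq_smul_of_hasLineDerivAt hxZ hg hGline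
  have hmax : IsLocalMax (fun s => G (u s - ξ s) (w s)) t := by
    filter_upwards [Ioo_mem_nhds ht.1 ht.2] with s hs
    exact hG1 ▸ hmem s (Ioo_subset_Icc_self hs)
  have hderiv : ⟪g, u' t - ξ' t⟫ + Gw x (w t) (w' t) = 0 :=
    hmax.hasDerivAt_eq_zero <| hGlip.hasDerivAt_comp₂ (hu'.sub hξ') hw' (hGline _)
      (fun p q => hasLineDerivAt_iff_tendsto_div.2 (hgradw p q (w' t)))
      ((ContinuousLinearMap.apply ℝ ℝ (w' t)).continuous.comp hGwcont).continuousAt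
  have hdist : infDist x (frontier {z | G z (w t) ≤ 1}) = 0 :=
    infDist_zero_of_mem ((mem_frontier_iff_notMem_interior hxZ).2 hint)
  rw [hdist, zero_add]
  nth_rw 1 [hα]
  rw [real_inner_smul_left, inner_add_right, real_inner_smul_right, real_inner_self_eq_norm_sq,
    div_mul_cancel₀ _ (by positivity), hderiv, mul_zero]

/-- Under Hypothesis (B) with `∇_w G` continuous, the solution of the sweeping process
satisfies `⟪ξ′(t), x′(t) + s(t)⟫ = 0` a.e., with the correction term `s` given by
formula (2.10) of the paper. -/
theorem orthogonality_identity
    {X W : Type*} [NormedAddCommGroup X] [InnerProductSpace ℝ X] [CompleteSpace X]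
    [NormedAddCommGroup W] [NormedSpace ℝ W] [CompleteSpace W]
    (G : X → W → ℝ) (hGnonneg : ∀ (x : X) (w : W), 0 ≤ G x w)
    (hGlip : LocallyLipschitz (fun p : X × W => G p.1 p.2))
    (Zs : W → Set X) (hZ : ∀ w, Zs w = {z : X | G z w ≤ 1})
    (Gx : X → W → X)
    (hgradx : ∀ w : W, ∀ z ∈ Zs w, ∀ y : X,
      Tendsto (fun t : ℝ => (G (z + t • y) w - G z w) / t) (𝓝[≠] (0:ℝ)) (𝓝 ⟪Gx z w, y⟫))
    (lam c L : ℝ) (hlam : 0 < lam) (hc : 0 < c) (hL : 0 < L)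
    (μ₁ : W → ℝ → ℝ) (μ₂ : ℝ → ℝ)
    (hμ₁zero : ∀ w, μ₁ w 0 = 0) (hμ₂zero : μ₂ 0 = 0)
    (hμ₁top : ∀ w, Tendsto (μ₁ w) atTop atTop) (hμ₂top : Tendsto μ₂ atTop atTop)
    (hyp1 : ∀ (x : X) (w : W), G x w = 1 → c ≤ ‖Gx x w‖)
    (hyp2 : ∀ w : W, ∀ x ∈ Zs w, ∀ y ∈ Zs w, ‖Gx x w - Gx y w‖ ≤ μ₁ w ‖x - y‖)
    (hyp3 : ∀ w : W, ∀ x ∈ frontier (Zs w), ∀ z ∈ Zs w,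
      ⟪Gx x w - Gx z w, x - z⟫ ≥ -lam * ‖x - z‖ ^ 2)
    (hyp4 : ∀ (x : X) (w w' : W), |G x w - G x w'| ≤ L * ‖w - w'‖)
    (hyp5 : ∀ ρ > (0:ℝ), ∀ (w : W) (x : X), ρ ≤ infDist x (Zs w) → μ₂ ρ ≤ G x w - 1)
    (Gw : X → W → StrongDual ℝ W)
    (hgradw : ∀ (x : X) (w : W) (v : W),
      Tendsto (fun t : ℝ => (G x (w + t • v) - G x w) / t) (𝓝[≠] (0:ℝ)) (𝓝 (Gw x w v)))
    (hGwcont : Continuous (fun p : X × W => Gw p.1 p.2))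
    (T : ℝ) (hT : 0 < T)
    (u u' : ℝ → X) (hu : IsW11 T u u')
    (w w' : ℝ → W) (hw : IsW11 T w w')
    (x₀ : X) (hx₀ : x₀ ∈ Zs (w 0))
    (ξ ξ' : ℝ → X) (hξ : IsW11 T ξ ξ')
    (hsol : IsGPSol T (c / lam) Zs u w x₀ ξ ξ') :
    ∀ᵐ t ∂(volume.restrict (Ioo 0 T)),
      ⟪ξ' t, (u' t - ξ' t) +
        (Gw (u t - ξ t) (w t) (w' t) /
            (infDist (u t - ξ t) (frontier (Zs (w t))) + ‖Gx (u t - ξ t) (w t)‖ ^ 2)) •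
          Gx (u t - ξ t) (w t)⟫ = 0 :=
  orthogonality_identity_general G hGlip Zs hZ Gx hgradx lam c hc hyp1 Gw hgradw hGwcont T u u' hu w
    w' hw x₀ ξ ξ' hξ hsol
end

section
/- Let X be a real Hilbert space and T > 0. Let v_n ∈ L¹(0,T; X) for n ∈ ℕ ∪ {0} and g_n ∈ L¹(0,T; ℝ) for n ∈ ℕ ∪ {0} be such that: (i) ∫₀ᵀ ⟨v_n(t), φ(t)⟩ dt → ∫₀ᵀ ⟨v₀(t), φ(t)⟩ dt as n → ∞ for every continuous φ : [0,T] → X; (ii) ∫₀ᵀ |g_n(t) − g₀(t)| dt → 0; (iii) |v_n(t)| ≤ g_n(t) a.e. for all n ∈ ℕ; (iv) |v₀(t)| = g₀(t) a.e. Then ∫₀ᵀ |v_n(t) − v₀(t)| dt → 0 as n → ∞. -/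
open MeasureTheory Set Filter
open scoped RealInnerProductSpace Topology

/-!
Fix a continuous field `φ` with `‖φ‖ ≤ 1` such that `‖v₀‖ φ` is `L¹`-close to `v₀`, say
`∫ ‖v₀ - ‖v₀‖ φ‖ = K`. Since `‖a - ‖a‖ φ‖² ≤ 2 ‖a‖ (‖a‖ - ⟪a, φ⟫)`, for every `c > 0`
`‖a - b‖ ≤ |‖a‖ - ‖b‖| + ‖b - ‖b‖ φ‖ + c ‖a‖ + (‖a‖ - ⟪a, φ⟫) / (2c)`.
Take `a = v n`, `b = v₀` and integrate. Both `∫ |‖v n‖ - ‖v₀‖|` and `∫ ‖v n‖ - ∫ ⟪v n, φ⟫` are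
at most `∫ g n - ∫ ⟪v n, φ⟫ + ∫ |g n - g₀|`, which tends to `∫ ‖v₀‖ - ∫ ⟪v₀, φ⟫ ≤ K`.
So eventually `∫ ‖v n - v₀‖` is below any number exceeding `2K + K / (2c) + c ∫ ‖v₀‖`, and this
bound can be made arbitrarily small by taking first `c`, then `K` small.
-/

section Pointwise

variable {X : Type*} [NormedAddCommGroup X] [InnerProductSpace ℝ X]

lemma norm_sub_inner_le_norm_sub_norm_smul (b u : X) : ‖b‖ - ⟪b, u⟫ ≤ ‖b - ‖b‖ • u‖ := by
  rcases eq_or_ne b 0 with rfl | hb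
  · simp
  have key : ‖b‖ * (‖b‖ - ⟪b, u⟫) ≤ ‖b‖ * ‖b - ‖b‖ • u‖ :=
    calc ‖b‖ * (‖b‖ - ⟪b, u⟫) = ⟪b, b - ‖b‖ • u⟫ := by
          rw [inner_sub_right, real_inner_smul_right, real_inner_self_eq_norm_sq]; ring
      _ ≤ ‖b‖ * ‖b - ‖b‖ • u‖ := real_inner_le_norm _ _
  exact le_of_mul_le_mul_left key (norm_pos_iff.mpr hb)

lemma inner_le_norm_of_norm_le_one (a : X) {u : X} (hu : ‖u‖ ≤ 1) : ⟪a, u⟫ ≤ ‖a‖ :=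
  (real_inner_le_norm a u).trans (mul_le_of_le_one_right (norm_nonneg a) hu)

lemma norm_sub_norm_smul_le {u : X} (a : X) (hu : ‖u‖ ≤ 1) {c : ℝ} (hc : 0 < c) :
    ‖a - ‖a‖ • u‖ ≤ c * ‖a‖ + (‖a‖ - ⟪a, u⟫) / (2 * c) := by
  have hdefect : 0 ≤ ‖a‖ - ⟪a, u⟫ := sub_nonneg.mpr (inner_le_norm_of_norm_le_one a hu)
  have hsq : ‖a - ‖a‖ • u‖ ^ 2 ≤ 2 * ‖a‖ * (‖a‖ - ⟪a, u⟫) := by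
    rw [norm_sub_sq_real, real_inner_smul_right, norm_smul, norm_norm]
    nlinarith [mul_le_of_le_one_right (norm_nonneg a) hu,
      mul_nonneg (norm_nonneg a) (norm_nonneg u)]
  have hamgm : 2 * ‖a‖ * (‖a‖ - ⟪a, u⟫) ≤ (c * ‖a‖ + (‖a‖ - ⟪a, u⟫) / (2 * c)) ^ 2 := by
    have := sq_nonneg (c * ‖a‖ - (‖a‖ - ⟪a, u⟫) / (2 * c))
    field_simp at this ⊢
    nlinarith
  exact (pow_le_pow_iff_left₀ (norm_nonneg _) (by positivity) two_ne_zero).mp (hsq.trans hamgm)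

lemma norm_sub_le_of_norm_le_one {u : X} (a b : X) (hu : ‖u‖ ≤ 1) {c : ℝ} (hc : 0 < c) :
    ‖a - b‖ ≤ |‖a‖ - ‖b‖| + ‖b - ‖b‖ • u‖ + (c * ‖a‖ + (‖a‖ - ⟪a, u⟫) / (2 * c)) := by
  have hsplit : a - b = (‖a‖ - ‖b‖) • u - (b - ‖b‖ • u) + (a - ‖a‖ • u) := by
    rw [sub_smul]; abel
  calc ‖a - b‖ ≤ ‖(‖a‖ - ‖b‖) • u‖ + ‖b - ‖b‖ • u‖ + ‖a - ‖a‖ • u‖ := by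
        rw [hsplit]; exact (norm_add_le _ _).trans (by gcongr; exact norm_sub_le _ _)
    _ ≤ _ := by
        gcongr
        · rw [norm_smul, Real.norm_eq_abs]
          exact mul_le_of_le_one_right (abs_nonneg _) hu
        · exact norm_sub_norm_smul_le a hu hc

lemma norm_sub_norm_smul_inv_max_smul_le (x w : X) {ρ : ℝ} (hρ : 0 < ρ) :
    ‖x - ‖x‖ • (max ρ ‖w‖)⁻¹ • w‖ ≤ 2 * ‖x - w‖ + ρ := by
  set m := max ρ ‖w‖
  have hm : 0 < m := lt_max_of_lt_left hρ
  have hw : w = m • m⁻¹ • w := by rw [smul_smul, mul_inv_cancel₀ hm.ne', one_smul]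
  have hu : ‖m⁻¹ • w‖ ≤ 1 := by
    rw [norm_smul, norm_inv, Real.norm_of_nonneg hm.le, inv_mul_le_iff₀ hm, mul_one]
    exact le_max_right _ _
  have hgap : |m - ‖x‖| ≤ ρ + ‖x - w‖ := by
    have h₁ := norm_sub_norm_le x w
    have h₂ := norm_sub_norm_le w x
    rw [norm_sub_rev w x] at h₂
    rw [abs_le]
    constructor <;> linarith [le_max_right ρ ‖w‖, max_le_add_of_nonneg hρ.le (norm_nonneg w)]
  calc ‖x - ‖x‖ • m⁻¹ • w‖ = ‖(x - w) + (m - ‖x‖) • m⁻¹ • w‖ := by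
        conv_lhs => rw [hw]
        congr 1; rw [sub_smul, ← hw]; abel
    _ ≤ ‖x - w‖ + |m - ‖x‖| * ‖m⁻¹ • w‖ := by
        rw [← Real.norm_eq_abs, ← norm_smul]; exact norm_add_le _ _
    _ ≤ ‖x - w‖ + (ρ + ‖x - w‖) * 1 := by gcongr
    _ = 2 * ‖x - w‖ + ρ := by ring

end Pointwise

section Approximation

variable {α X : Type*} [TopologicalSpace α] [NormalSpace α] [MeasurableSpace α] [BorelSpace α]
  [NormedAddCommGroup X] [InnerProductSpace ℝ X]

lemma exists_continuous_integral_norm_sub_norm_smul_lt {μ : Measure α} [IsFiniteMeasure μ]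
    [μ.WeaklyRegular] {f : α → X} (hf : Integrable f μ) {δ : ℝ} (hδ : 0 < δ) :
    ∃ φ : α → X, Continuous φ ∧ (∀ t, ‖φ t‖ ≤ 1) ∧ ∫ t, ‖f t - ‖f t‖ • φ t‖ ∂μ < δ := by
  obtain ⟨w, hfw, hw⟩ := hf.exists_boundedContinuous_integral_sub_le (ε := δ / 4) (by positivity)
  set ρ : ℝ := δ / (4 * (μ.real univ + 1))
  have hρ : 0 < ρ := by positivity
  have hmax : ∀ t, 0 < max ρ ‖w t‖ := fun t => lt_max_of_lt_left hρ
  refine ⟨fun t => (max ρ ‖w t‖)⁻¹ • w t, ?_, fun t => ?_, ?_⟩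
  · exact ((continuous_const.max w.continuous.norm).inv₀ fun t => (hmax t).ne').smul w.continuous
  · rw [norm_smul, norm_inv, Real.norm_of_nonneg (hmax t).le, inv_mul_le_iff₀ (hmax t), mul_one]
    exact le_max_right _ _
  have hρμ : ρ * μ.real univ ≤ δ / 4 := by
    rw [div_mul_eq_mul_div, div_le_div_iff₀ (by positivity) (by positivity)]
    nlinarith [measureReal_nonneg (μ := μ) (s := univ)]
  have hfw_int : Integrable (fun t => 2 * ‖f t - w t‖) μ := (hf.sub hw).norm.const_mul 2
  calc ∫ t, ‖f t - ‖f t‖ • (max ρ ‖w t‖)⁻¹ • w t‖ ∂μ ≤ ∫ t, (2 * ‖f t - w t‖ + ρ) ∂μ :=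
        integral_mono_of_nonneg (ae_of_all _ fun t => norm_nonneg _)
          (hfw_int.add (integrable_const ρ))
          (ae_of_all _ fun t => norm_sub_norm_smul_inv_max_smul_le (f t) (w t) hρ)
    _ = 2 * ∫ t, ‖f t - w t‖ ∂μ + ρ * μ.real univ := by
        rw [integral_add hfw_int (integrable_const ρ), integral_const_mul,
          integral_const, smul_eq_mul, mul_comm ρ]
    _ < δ := by linarith

end Approximation

section Integrals

variable {α : Type*} [MeasurableSpace α] {μ : Measure α}

lemma integral_abs_norm_sub_norm_le {E : Type*} [NormedAddCommGroup E] {a b : α → E}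
    {γ γ₀ : α → ℝ} (ha : Integrable a μ) (hb : Integrable b μ) (hγ : Integrable γ μ)
    (hγ₀ : Integrable γ₀ μ)
    (hdom : ∀ᵐ t ∂μ, ‖a t‖ ≤ γ t) (hnorm : ∀ᵐ t ∂μ, ‖b t‖ = γ₀ t) :
    ∫ t, |‖a t‖ - ‖b t‖| ∂μ ≤ ∫ t, γ t ∂μ - ∫ t, ‖a t‖ ∂μ + ∫ t, |γ t - γ₀ t| ∂μ := by
  have hslack : Integrable (fun t => γ t - ‖a t‖) μ := hγ.sub ha.norm
  have hgap : Integrable (fun t => |γ t - γ₀ t|) μ := (hγ.sub hγ₀).abs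
  rw [← integral_sub hγ ha.norm, ← integral_add hslack hgap]
  refine integral_mono_ae (ha.norm.sub hb.norm).abs (hslack.add hgap) ?_
  filter_upwards [hdom, hnorm] with t hat hbt
  simp only [hbt, abs_le]
  constructor <;> linarith [le_abs_self (γ t - γ₀ t), neg_abs_le (γ t - γ₀ t)]

lemma tendsto_integral_of_tendsto_integral_abs_sub {γ : ℕ → α → ℝ} {γ₀ : α → ℝ}
    (hγ : ∀ n, Integrable (γ n) μ) (hγ₀ : Integrable γ₀ μ)
    (hlim : Tendsto (fun n => ∫ t, |γ n t - γ₀ t| ∂μ) atTop (𝓝 0)) :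
    Tendsto (fun n => ∫ t, γ n t ∂μ) atTop (𝓝 (∫ t, γ₀ t ∂μ)) := by
  rw [tendsto_iff_norm_sub_tendsto_zero]
  refine squeeze_zero (fun n => norm_nonneg _) (fun n => ?_) hlim
  rw [Real.norm_eq_abs, ← integral_sub (hγ n) hγ₀]
  exact abs_integral_le_integral_abs

variable {X : Type*} [NormedAddCommGroup X] [InnerProductSpace ℝ X] {φ : α → X}

lemma MeasureTheory.Integrable.inner_of_norm_le_one {f : α → X} (hf : Integrable f μ)
    (hφ : AEStronglyMeasurable φ μ) (hφ1 : ∀ t, ‖φ t‖ ≤ 1) :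
    Integrable (fun t => ⟪f t, φ t⟫) μ :=
  hf.norm.mono' (hf.aestronglyMeasurable.inner hφ) <| ae_of_all _ fun t =>
    (abs_real_inner_le_norm _ _).trans (mul_le_of_le_one_right (norm_nonneg _) (hφ1 t))

lemma MeasureTheory.Integrable.norm_sub_norm_smul {f : α → X} (hf : Integrable f μ)
    (hφ : AEStronglyMeasurable φ μ) (hφ1 : ∀ t, ‖φ t‖ ≤ 1) :
    Integrable (fun t => ‖f t - ‖f t‖ • φ t‖) μ :=
  (hf.sub (hf.norm.smul_bdd 1 hφ (ae_of_all _ hφ1))).norm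

lemma integral_norm_sub_inner_le {f : α → X} (hf : Integrable f μ)
    (hφ : AEStronglyMeasurable φ μ) (hφ1 : ∀ t, ‖φ t‖ ≤ 1) :
    ∫ t, ‖f t‖ ∂μ - ∫ t, ⟪f t, φ t⟫ ∂μ ≤ ∫ t, ‖f t - ‖f t‖ • φ t‖ ∂μ := by
  rw [← integral_sub hf.norm (hf.inner_of_norm_le_one hφ hφ1)]
  exact integral_mono (hf.norm.sub (hf.inner_of_norm_le_one hφ hφ1))
    (hf.norm_sub_norm_smul hφ hφ1) fun t => norm_sub_inner_le_norm_sub_norm_smul (f t) (φ t)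

lemma integral_norm_sub_le_of_norm_le_one {a b : α → X} (ha : Integrable a μ)
    (hb : Integrable b μ) (hφ : AEStronglyMeasurable φ μ) (hφ1 : ∀ t, ‖φ t‖ ≤ 1) {c : ℝ}
    (hc : 0 < c) :
    ∫ t, ‖a t - b t‖ ∂μ ≤ ∫ t, |‖a t‖ - ‖b t‖| ∂μ + ∫ t, ‖b t - ‖b t‖ • φ t‖ ∂μ
      + (c * ∫ t, ‖a t‖ ∂μ + (∫ t, ‖a t‖ ∂μ - ∫ t, ⟪a t, φ t⟫ ∂μ) / (2 * c)) := by
  have hgap : Integrable (fun t => |‖a t‖ - ‖b t‖|) μ := (ha.norm.sub hb.norm).abs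
  have hdir := hb.norm_sub_norm_smul hφ hφ1
  have hdefect : Integrable (fun t => (‖a t‖ - ⟪a t, φ t⟫) / (2 * c)) μ :=
    (ha.norm.sub (ha.inner_of_norm_le_one hφ hφ1)).div_const (2 * c)
  have hmass : Integrable (fun t => c * ‖a t‖) μ := ha.norm.const_mul c
  have hcomparison : Integrable (fun t => |‖a t‖ - ‖b t‖| + ‖b t - ‖b t‖ • φ t‖) μ :=
    hgap.add hdir
  have hpolar : Integrable (fun t => c * ‖a t‖ + (‖a t‖ - ⟪a t, φ t⟫) / (2 * c)) μ :=
    hmass.add hdefect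
  calc ∫ t, ‖a t - b t‖ ∂μ
      ≤ ∫ t, (|‖a t‖ - ‖b t‖| + ‖b t - ‖b t‖ • φ t‖
          + (c * ‖a t‖ + (‖a t‖ - ⟪a t, φ t⟫) / (2 * c))) ∂μ :=
        integral_mono_of_nonneg (ae_of_all _ fun t => norm_nonneg _)
          (hcomparison.add hpolar)
          (ae_of_all _ fun t => norm_sub_le_of_norm_le_one (a t) (b t) (hφ1 t) hc)
    _ = _ := by
        rw [integral_add hcomparison hpolar, integral_add hgap hdir,
          integral_add hmass hdefect, integral_const_mul, integral_div,
          integral_sub ha.norm (ha.inner_of_norm_le_one hφ hφ1)]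

lemma eventually_integral_norm_sub_lt {v : ℕ → α → X} {v₀ : α → X} {g : ℕ → α → ℝ}
    {g₀ : α → ℝ} (hv : ∀ n, Integrable (v n) μ) (hv₀ : Integrable v₀ μ)
    (hg : ∀ n, Integrable (g n) μ) (hg₀ : Integrable g₀ μ)
    (hφ : AEStronglyMeasurable φ μ) (hφ1 : ∀ t, ‖φ t‖ ≤ 1)
    (hweak : Tendsto (fun n => ∫ t, ⟪v n t, φ t⟫ ∂μ) atTop (𝓝 (∫ t, ⟪v₀ t, φ t⟫ ∂μ)))
    (hgconv : Tendsto (fun n => ∫ t, |g n t - g₀ t| ∂μ) atTop (𝓝 0))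
    (hdom : ∀ n, ∀ᵐ t ∂μ, ‖v n t‖ ≤ g n t) (hnorm : ∀ᵐ t ∂μ, ‖v₀ t‖ = g₀ t)
    {c ε : ℝ} (hc : 0 < c)
    (hε : 2 * ∫ t, ‖v₀ t - ‖v₀ t‖ • φ t‖ ∂μ + (∫ t, ‖v₀ t - ‖v₀ t‖ • φ t‖ ∂μ) / (2 * c)
      + c * ∫ t, ‖v₀ t‖ ∂μ < ε) :
    ∀ᶠ n in atTop, ∫ t, ‖v n t - v₀ t‖ ∂μ < ε := by
  set K := ∫ t, ‖v₀ t - ‖v₀ t‖ • φ t‖ ∂μ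
  set G := ∫ t, ‖v₀ t‖ ∂μ
  set I := ∫ t, ⟪v₀ t, φ t⟫ ∂μ
  set A := fun n => ∫ t, ‖v n t‖ ∂μ
  set B := fun n => ∫ t, ⟪v n t, φ t⟫ ∂μ
  set C := fun n => ∫ t, g n t ∂μ
  set E := fun n => ∫ t, |g n t - g₀ t| ∂μ
  have hC : Tendsto C atTop (𝓝 G) := by
    rw [show G = ∫ t, g₀ t ∂μ from integral_congr_ae hnorm]
    exact tendsto_integral_of_tendsto_integral_abs_sub hg hg₀ hgconv
  have hIK : G - I ≤ K := integral_norm_sub_inner_le hv₀ hφ hφ1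
  have hBA : ∀ n, B n ≤ A n := fun n =>
    integral_mono ((hv n).inner_of_norm_le_one hφ hφ1) (hv n).norm fun t =>
      inner_le_norm_of_norm_le_one (v n t) (hφ1 t)
  have hAC : ∀ n, A n ≤ C n := fun n => integral_mono_ae (hv n).norm (hg n) (hdom n)
  have hR : Tendsto (fun n => (C n - B n) + (C n - B n) / (2 * c) + E n + K + c * C n) atTop
      (𝓝 ((G - I) + (G - I) / (2 * c) + 0 + K + c * G)) := by
    have hCB := hC.sub hweak
    exact ((((hCB.add (hCB.div_const _)).add hgconv).add_const K).add (hC.const_mul c))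
  have hlim : (G - I) + (G - I) / (2 * c) + 0 + K + c * G < ε := by
    have : (G - I) / (2 * c) ≤ K / (2 * c) := by gcongr
    linarith
  filter_upwards [hR.eventually_lt_const hlim] with n hn
  calc ∫ t, ‖v n t - v₀ t‖ ∂μ
      ≤ ∫ t, |‖v n t‖ - ‖v₀ t‖| ∂μ + K + (c * A n + (A n - B n) / (2 * c)) :=
        integral_norm_sub_le_of_norm_le_one (hv n) hv₀ hφ hφ1 hc
    _ ≤ (C n - A n + E n) + K + (c * C n + (C n - B n) / (2 * c)) := by
        gcongr
        · exact integral_abs_norm_sub_norm_le (hv n) hv₀ (hg n) hg₀ (hdom n) hnorm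
        · exact hAC n
        · exact hAC n
    _ ≤ (C n - B n) + (C n - B n) / (2 * c) + E n + K + c * C n := by linarith [hBA n]
    _ < ε := hn

end Integrals

theorem weak_plus_norm_implies_strong_general
    {X : Type*} [NormedAddCommGroup X] [InnerProductSpace ℝ X]
    (T : ℝ)
    (v : ℕ → ℝ → X) (v₀ : ℝ → X) (g : ℕ → ℝ → ℝ) (g₀ : ℝ → ℝ)
    (hv : ∀ n, IntegrableOn (v n) (Ioo 0 T)) (hv₀ : IntegrableOn v₀ (Ioo 0 T))
    (hg : ∀ n, IntegrableOn (g n) (Ioo 0 T)) (hg₀ : IntegrableOn g₀ (Ioo 0 T))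
    (hweak : ∀ φ : ℝ → X, ContinuousOn φ (Icc 0 T) →
      Tendsto (fun n => ∫ t in Ioo 0 T, ⟪v n t, φ t⟫) atTop
        (𝓝 (∫ t in Ioo 0 T, ⟪v₀ t, φ t⟫)))
    (hgconv : Tendsto (fun n => ∫ t in Ioo 0 T, |g n t - g₀ t|) atTop (𝓝 0))
    (hdom : ∀ n, ∀ᵐ t ∂(volume.restrict (Ioo 0 T)), ‖v n t‖ ≤ g n t)
    (hnorm : ∀ᵐ t ∂(volume.restrict (Ioo 0 T)), ‖v₀ t‖ = g₀ t) :
    Tendsto (fun n => ∫ t in Ioo 0 T, ‖v n t - v₀ t‖) atTop (𝓝 0) := by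
  refine tendsto_order.2 ⟨fun a ha => Eventually.of_forall fun n =>
    ha.trans_le (integral_nonneg fun t => norm_nonneg _), fun ε hε => ?_⟩
  set G := ∫ t in Ioo 0 T, ‖v₀ t‖
  have hG : 0 ≤ G := integral_nonneg fun t => norm_nonneg _
  set c := ε / (4 * (G + 1))
  have hc : 0 < c := by positivity
  have hcG : c * G < ε / 2 := by
    rw [div_mul_eq_mul_div, div_lt_div_iff₀ (by positivity) two_pos]
    nlinarith
  obtain ⟨φ, hφ, hφ1, hK⟩ := exists_continuous_integral_norm_sub_norm_smul_lt hv₀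
    (δ := ε / 2 / (2 + 1 / (2 * c))) (by positivity)
  refine eventually_integral_norm_sub_lt hv hv₀ hg hg₀ hφ.aestronglyMeasurable hφ1
    (hweak φ hφ.continuousOn) hgconv hdom hnorm hc ?_
  set K := ∫ t in Ioo 0 T, ‖v₀ t - ‖v₀ t‖ • φ t‖
  rw [lt_div_iff₀ (by positivity)] at hK
  change 2 * K + K / (2 * c) + c * G < ε
  linarith [show K * (2 + 1 / (2 * c)) = 2 * K + K / (2 * c) by ring]

/-- The `L¹` convergence lemma: if `v_n ⇀ v₀` weakly against continuous test functions,
the dominating functions `g_n → g₀` in `L¹`, `‖v_n‖ ≤ g_n` a.e. and `‖v₀‖ = g₀` a.e.,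
then `v_n → v₀` strongly in `L¹(0,T;X)`. -/
theorem weak_plus_norm_implies_strong
    {X : Type*} [NormedAddCommGroup X] [InnerProductSpace ℝ X] [CompleteSpace X]
    (T : ℝ) (hT : 0 < T)
    (v : ℕ → ℝ → X) (v₀ : ℝ → X) (g : ℕ → ℝ → ℝ) (g₀ : ℝ → ℝ)
    (hv : ∀ n, IntegrableOn (v n) (Ioo 0 T)) (hv₀ : IntegrableOn v₀ (Ioo 0 T))
    (hg : ∀ n, IntegrableOn (g n) (Ioo 0 T)) (hg₀ : IntegrableOn g₀ (Ioo 0 T))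
    (hweak : ∀ φ : ℝ → X, ContinuousOn φ (Icc 0 T) →
      Tendsto (fun n => ∫ t in Ioo 0 T, ⟪v n t, φ t⟫) atTop
        (𝓝 (∫ t in Ioo 0 T, ⟪v₀ t, φ t⟫)))
    (hgconv : Tendsto (fun n => ∫ t in Ioo 0 T, |g n t - g₀ t|) atTop (𝓝 0))
    (hdom : ∀ n, ∀ᵐ t ∂(volume.restrict (Ioo 0 T)), ‖v n t‖ ≤ g n t)
    (hnorm : ∀ᵐ t ∂(volume.restrict (Ioo 0 T)), ‖v₀ t‖ = g₀ t) :
    Tendsto (fun n => ∫ t in Ioo 0 T, ‖v n t - v₀ t‖) atTop (𝓝 0) :=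
  weak_plus_norm_implies_strong_general T v v₀ g g₀ hv hv₀ hg hg₀ hweak hgconv hdom hnorm
end
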